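/- arXiv:1109.3316 — 7 statements merged into one kernel-verified Lean document; each statement's English description precedes it below -/
import Mathlib

section
/- Let 0 < α < π/2 and let a ≤ b be reals. Let γ : ℝ → ℂ be continuously differentiable on [a,b] and suppose that for every t ∈ [a,b] we have γ(t) ≠ 0 and ⟪deriv γ t, −γ(t)⟫ ≥ cos(α)·‖deriv γ t‖·‖γ(t)‖ (the angle restriction with respect to the origin). Then ∫_{a}^{b} ‖deriv γ t‖ dt ≤ (1/cos α)·(‖γ(a)‖ − ‖γ(b)‖). -/
/-!
Along the curve, `d/dt ‖γ t‖ = ⟪γ t, γ' t⟫ / ‖γ t‖`, and the angle restriction says exactly that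
this is at most `-cos α · ‖γ' t‖`: the distance to the root decreases at least at rate `cos α`
per unit of arc length. Integrating over `[a, b]` bounds `cos α` times the length by the total
decrease `‖γ a‖ - ‖γ b‖`.
-/

open Set MeasureTheory
open scoped RealInnerProductSpace

theorem HasDerivAt.norm {F : Type*} [NormedAddCommGroup F] [InnerProductSpace ℝ F]
    {f : ℝ → F} {f' : F} {x : ℝ} (hf : HasDerivAt f f' x) (hx : f x ≠ 0) :
    HasDerivAt (fun t => ‖f t‖) (⟪f x, f'⟫ / ‖f x‖) x := by
  have h := hf.norm_sq.sqrt (pow_ne_zero 2 (norm_ne_zero_iff.mpr hx))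
  simp only [Real.sqrt_sq (norm_nonneg _)] at h
  convert h using 1
  ring

theorem ContDiffOn.integrableOn_deriv_Icc {E : Type*} [NormedAddCommGroup E] [NormedSpace ℝ E]
    {f : ℝ → E} {a b : ℝ} (hf : ContDiffOn ℝ 1 f (Icc a b)) :
    IntegrableOn (deriv f) (Icc a b) := by
  -- `deriv f` is unconstrained at the endpoints; inside it agrees with the continuous
  -- `derivWithin f (Icc a b)`.
  rw [integrableOn_Icc_iff_integrableOn_Ioo]
  rcases lt_or_ge a b with hab | hba
  · refine (((hf.continuousOn_derivWithin (uniqueDiffOn_Icc hab) le_rfl).integrableOn_Icc).mono_set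
      Ioo_subset_Icc_self).congr_fun (fun t ht => ?_) measurableSet_Ioo
    exact derivWithin_of_mem_nhds (Icc_mem_nhds ht.1 ht.2)
  · rw [Ioo_eq_empty hba.not_gt]
    exact integrableOn_empty

theorem integral_norm_deriv_le_of_inner_neg_ge {F : Type*} [NormedAddCommGroup F]
    [InnerProductSpace ℝ F] {γ : ℝ → F} {a b c : ℝ} (hc : 0 < c) (hab : a ≤ b)
    (hγ : ContDiffOn ℝ 1 γ (Icc a b)) (hne : ∀ t ∈ Ioo a b, γ t ≠ 0)
    (hangle : ∀ t ∈ Ioo a b, c * ‖deriv γ t‖ * ‖γ t‖ ≤ ⟪deriv γ t, -γ t⟫) :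
    ∫ t in a..b, ‖deriv γ t‖ ≤ (‖γ a‖ - ‖γ b‖) / c := by
  have hderiv : ∀ t ∈ Ioo a b, HasDerivAt (fun s => -‖γ s‖ / c)
      (-(⟪γ t, deriv γ t⟫ / ‖γ t‖) / c) t := fun t ht =>
    have hγt := (hγ.differentiableOn one_ne_zero t (Ioo_subset_Icc_self ht)).differentiableAt
      (Icc_mem_nhds ht.1 ht.2)
    ((HasDerivAt.norm hγt.hasDerivAt (hne t ht)).neg).div_const c
  have hrate : ∀ t ∈ Ioo a b, ‖deriv γ t‖ ≤ -(⟪γ t, deriv γ t⟫ / ‖γ t‖) / c := by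
    intro t ht
    have hγt : 0 < ‖γ t‖ := norm_pos_iff.mpr (hne t ht)
    have h := hangle t ht
    rw [inner_neg_right, real_inner_comm] at h
    rw [le_div_iff₀ hc, ← neg_div, le_div_iff₀ hγt]
    linarith
  convert intervalIntegral.integral_le_sub_of_hasDeriv_right_of_le (g := fun s => -‖γ s‖ / c) hab
    (hγ.continuousOn.norm.neg.div_const c) (fun t ht => (hderiv t ht).hasDerivWithinAt)
    hγ.integrableOn_deriv_Icc.norm hrate using 1
  ring

/-- shallowness half of Property 4: if a continuously differentiable
curve on `[a,b]` satisfies the angle restriction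
`⟪deriv γ t, −γ(t)⟫ ≥ cos(α)·‖deriv γ t‖·‖γ(t)‖` with respect to the origin,
then its length is at most `sec(α)·(‖γ(a)‖ − ‖γ(b)‖)`. -/
theorem angle_restricted_length_le (α : ℝ) (hα0 : 0 < α) (hα : α < Real.pi / 2)
    (a b : ℝ) (hab : a ≤ b) (γ : ℝ → ℂ)
    (hγ : ContDiffOn ℝ 1 γ (Set.Icc a b))
    (hne : ∀ t ∈ Set.Icc a b, γ t ≠ 0)
    (hangle : ∀ t ∈ Set.Icc a b,
      ((starRingEnd ℂ) (deriv γ t) * (-(γ t))).re ≥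
        Real.cos α * ‖deriv γ t‖ * ‖γ t‖) :
    (∫ t in a..b, ‖deriv γ t‖) ≤ (1 / Real.cos α) * (‖γ a‖ - ‖γ b‖) := by
  have hcos : 0 < Real.cos α := Real.cos_pos_of_mem_Ioo ⟨by linarith [Real.pi_pos], hα⟩
  rw [one_div_mul_eq_div]
  refine integral_norm_deriv_le_of_inner_neg_ge hcos hab hγ
    (fun t ht => hne t (Ioo_subset_Icc_self ht)) fun t ht => ?_
  rw [Complex.inner, mul_comm (-γ t)]
  exact hangle t (Ioo_subset_Icc_self ht)
end

section
/- Let 0 < α < π/2 and let a ≤ b be reals. Let γ : ℝ → ℂ be continuously differentiable on [a,b] and suppose that for every t ∈ [a,b] we have γ(t) ≠ 0 and the equality ⟪deriv γ t, −γ(t)⟫ = cos(α)·‖deriv γ t‖·‖γ(t)‖ (the tangent makes angle exactly α with the direction toward the origin). Then ∫_{a}^{b} ‖deriv γ t‖ dt = (1/cos α)·(‖γ(a)‖ − ‖γ(b)‖). -/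
/-! Along a spiral path the distance to the origin decreases at rate `cos α` times the speed:
`d/dt ‖γ‖ = ⟪γ, γ'⟫ / ‖γ‖ = -cos α · ‖γ'‖`. Hence `-‖γ‖ / cos α` is a primitive of the speed,
and since the speed is nonnegative it is automatically integrable, so the fundamental theorem of
calculus gives the length. -/

open Set Real intervalIntegral
open scoped RealInnerProductSpace

theorem HasDerivAt.norm_of_ne_zero {F : Type*} [NormedAddCommGroup F] [InnerProductSpace ℝ F]
    {f : ℝ → F} {f' : F} {x : ℝ} (hf : HasDerivAt f f' x) (h0 : f x ≠ 0) :
    HasDerivAt (‖f ·‖) (⟪f x, f'⟫ / ‖f x‖) x := by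
  have hsq : ‖f x‖ ^ 2 ≠ 0 := pow_ne_zero 2 (norm_ne_zero_iff.2 h0)
  convert hf.norm_sq.sqrt hsq using 1
  · simp only [sqrt_sq (norm_nonneg _)]
  · rw [sqrt_sq (norm_nonneg _)]
    ring

theorem HasDerivAt.norm_of_inner_neg_eq {F : Type*} [NormedAddCommGroup F]
    [InnerProductSpace ℝ F] {f : ℝ → F} {f' : F} {x c : ℝ} (hf : HasDerivAt f f' x)
    (h0 : f x ≠ 0) (hangle : ⟪f', -f x⟫ = c * ‖f'‖ * ‖f x‖) :
    HasDerivAt (‖f ·‖) (-(c * ‖f'‖)) x := by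
  convert hf.norm_of_ne_zero h0 using 1
  rw [eq_div_iff (norm_ne_zero_iff.2 h0), real_inner_comm]
  rw [inner_neg_right] at hangle
  linarith

theorem integral_eq_sub_of_hasDerivAt_of_nonneg {g g' : ℝ → ℝ} {a b : ℝ} (hab : a ≤ b)
    (hcont : ContinuousOn g (Icc a b)) (hderiv : ∀ x ∈ Ioo a b, HasDerivAt g (g' x) x)
    (hpos : ∀ x ∈ Ioo a b, 0 ≤ g' x) : ∫ x in a..b, g' x = g b - g a :=
  integral_eq_sub_of_hasDerivAt_of_le hab hcont hderiv <|
    (intervalIntegrable_iff_integrableOn_Ioc_of_le hab).2 <|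
      integrableOn_deriv_of_nonneg hcont hderiv hpos

/-- if a continuously differentiable curve on `[a,b]` makes angle exactly
`α` with the direction toward the origin at every time (i.e., it is a spiral path),
then its length equals `sec(α)·(‖γ(a)‖ − ‖γ(b)‖)`. -/
theorem spiral_path_length (α : ℝ) (hα0 : 0 < α) (hα : α < Real.pi / 2)
    (a b : ℝ) (hab : a ≤ b) (γ : ℝ → ℂ)
    (hγ : ContDiffOn ℝ 1 γ (Set.Icc a b))
    (hne : ∀ t ∈ Set.Icc a b, γ t ≠ 0)
    (hangle : ∀ t ∈ Set.Icc a b,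
      ((starRingEnd ℂ) (deriv γ t) * (-(γ t))).re =
        Real.cos α * ‖deriv γ t‖ * ‖γ t‖) :
    (∫ t in a..b, ‖deriv γ t‖) = (1 / Real.cos α) * (‖γ a‖ - ‖γ b‖) := by
  have hcos : cos α ≠ 0 := (cos_pos_of_mem_Ioo ⟨by linarith [pi_pos], hα⟩).ne'
  have hderiv : ∀ t ∈ Ioo a b, HasDerivAt (fun s => -‖γ s‖ / cos α) ‖deriv γ t‖ t := by
    intro t ht
    have hγt : HasDerivAt γ (deriv γ t) t :=
      ((hγ.differentiableOn one_ne_zero).differentiableAt (Icc_mem_nhds ht.1 ht.2)).hasDerivAt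
    have hangle_t : ⟪deriv γ t, -γ t⟫ = cos α * ‖deriv γ t‖ * ‖γ t‖ := by
      rw [Complex.inner, mul_comm, hangle t (Ioo_subset_Icc_self ht)]
    have h := ((hγt.norm_of_inner_neg_eq (hne t (Ioo_subset_Icc_self ht)) hangle_t).neg).div_const
      (cos α)
    rwa [neg_neg, mul_div_cancel_left₀ _ hcos] at h
  have hcont : ContinuousOn (fun s => -‖γ s‖ / cos α) (Icc a b) :=
    hγ.continuousOn.norm.neg.div_const _
  rw [integral_eq_sub_of_hasDerivAt_of_nonneg hab hcont hderiv fun _ _ => norm_nonneg _]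
  ring
end

section
/- Let 0 < α < π/2, let R₁, R₂ > 0 and φ₁, φ₂ ∈ ℝ, and let γ₁, γ₂ : ℝ → ℂ be the right logarithmic spirals γⱼ(t) = Rⱼ·e^{−t}·exp(i·(φⱼ + tan(α)·t)) for j = 1, 2. If the ranges of γ₁ and γ₂ have a common point, then the ranges of γ₁ and γ₂ are equal. In other words, two right spirals (for the same angle α) either coincide as curves or are disjoint. -/
/-! A logarithmic spiral is an orbit of the one-parameter group `τ ↦ exp((-1 + k i) τ)` acting on
`ℂ` by multiplication: shifting the parameter by `τ` multiplies every point by the same factor.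
Two spirals through a common point are therefore the same orbit, reparametrised by a shift. -/

open Complex

noncomputable def logSpiral (k R φ t : ℝ) : ℂ :=
  ((R * Real.exp (-t) : ℝ) : ℂ) * cexp (I * ((φ + k * t : ℝ) : ℂ))

theorem logSpiral_add (k R φ t τ : ℝ) :
    logSpiral k R φ (t + τ) = logSpiral k R φ t * cexp ((-1 + k * I) * τ) := by
  simp only [logSpiral, ofReal_mul, ofReal_exp, ofReal_add, ofReal_neg, mul_assoc, ← exp_add]
  ring_nf

theorem Set.range_eq_range_of_shift {G X : Type*} [AddGroup G] {f g : G → X} (s u : G)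
    (h : ∀ τ, f (s + τ) = g (u + τ)) : Set.range f = Set.range g := by
  have hf : Set.range (fun τ ↦ f (s + τ)) = Set.range f :=
    (add_left_surjective s).range_comp f
  have hg : Set.range (fun τ ↦ g (u + τ)) = Set.range g :=
    (add_left_surjective u).range_comp g
  rw [← hf, ← hg, funext h]

theorem range_logSpiral_eq_of_eq {k R₁ R₂ φ₁ φ₂ s u : ℝ}
    (h : logSpiral k R₁ φ₁ s = logSpiral k R₂ φ₂ u) :
    Set.range (logSpiral k R₁ φ₁) = Set.range (logSpiral k R₂ φ₂) :=
  Set.range_eq_range_of_shift s u fun τ ↦ by rw [logSpiral_add, logSpiral_add, h]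

theorem right_spirals_coincide_or_disjoint_general (α : ℝ)
    (R₁ R₂ φ₁ φ₂ : ℝ)
    (γ₁ γ₂ : ℝ → ℂ)
    (hγ₁ : ∀ t : ℝ, γ₁ t = (Complex.ofReal (R₁ * Real.exp (-t))) *
      Complex.exp (Complex.I * Complex.ofReal (φ₁ + Real.tan α * t)))
    (hγ₂ : ∀ t : ℝ, γ₂ t = (Complex.ofReal (R₂ * Real.exp (-t))) *
      Complex.exp (Complex.I * Complex.ofReal (φ₂ + Real.tan α * t)))
    (h : (Set.range γ₁ ∩ Set.range γ₂).Nonempty) :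
    Set.range γ₁ = Set.range γ₂ := by
  obtain rfl : γ₁ = logSpiral (Real.tan α) R₁ φ₁ := funext hγ₁
  obtain rfl : γ₂ = logSpiral (Real.tan α) R₂ φ₂ := funext hγ₂
  obtain ⟨z, ⟨s, hs⟩, ⟨u, hu⟩⟩ := h
  exact range_logSpiral_eq_of_eq (hs.trans hu.symm)

/-- two right logarithmic spirals (for the same restricting angle `α`)
either coincide as curves or are disjoint: if their ranges share a point, the
ranges are equal. -/
theorem right_spirals_coincide_or_disjoint (α : ℝ) (hα0 : 0 < α) (hα : α < Real.pi / 2)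
    (R₁ R₂ φ₁ φ₂ : ℝ) (hR₁ : 0 < R₁) (hR₂ : 0 < R₂)
    (γ₁ γ₂ : ℝ → ℂ)
    (hγ₁ : ∀ t : ℝ, γ₁ t = (Complex.ofReal (R₁ * Real.exp (-t))) *
      Complex.exp (Complex.I * Complex.ofReal (φ₁ + Real.tan α * t)))
    (hγ₂ : ∀ t : ℝ, γ₂ t = (Complex.ofReal (R₂ * Real.exp (-t))) *
      Complex.exp (Complex.I * Complex.ofReal (φ₂ + Real.tan α * t)))
    (h : (Set.range γ₁ ∩ Set.range γ₂).Nonempty) :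
    Set.range γ₁ = Set.range γ₂ :=
  right_spirals_coincide_or_disjoint_general α R₁ R₂ φ₁ φ₂ γ₁ γ₂ hγ₁ hγ₂ h
end

section
/- Let 0 < α < π/2 and let x, y : ℝ → ℝ be functions that are differentiable at every point with deriv x t ≥ 0 and deriv y t ≥ 0 for all t. Define γ : ℝ → ℂ by γ(t) = e^{x(t)+y(t)}·exp(i·(y(t) − x(t))·tan α). Then for every t, ⟪deriv γ t, γ(t)⟫ ≥ cos(α)·‖deriv γ t‖·‖γ(t)‖; that is, the tangent of the image curve makes angle at most α with the outward radial direction, so reversing orientation, the image of any monotone (north-east directed) path under the transformation (x,y) ↦ (R, φ) = (e^{x+y}, (y−x)·tan α) satisfies the angle restriction with respect to the root at the origin. -/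
/-!
Writing `γ = exp ∘ g` with `g = (x + y) + i (y - x) tan α` gives `γ' = γ g'`, so
`⟪γ', γ⟫ = ‖γ‖² re g'` and `‖γ'‖ ‖γ‖ = ‖γ‖² ‖g'‖`; it remains to see `cos α ‖g'‖ ≤ re g'`.
Monotonicity gives `|y' - x'| ≤ x' + y'`, i.e. `|im g'| ≤ re g' |tan α|`, which puts `g'` in the
sector of half-angle `|α|` around the positive real axis.
-/

open Complex ComplexConjugate

lemma Complex.re_conj_mul_mul_self (z w : ℂ) : (conj (z * w) * z).re = ‖z‖ ^ 2 * w.re := by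
  rw [map_mul, mul_comm, ← mul_assoc, mul_conj, re_ofReal_mul, conj_re, normSq_eq_norm_sq]

lemma Complex.mul_norm_mul_norm_le_re_conj_mul_mul_self {c : ℝ} (z : ℂ) {w : ℂ}
    (h : c * ‖w‖ ≤ w.re) : c * ‖z * w‖ * ‖z‖ ≤ (conj (z * w) * z).re := by
  rw [re_conj_mul_mul_self, norm_mul]
  calc c * (‖z‖ * ‖w‖) * ‖z‖ = ‖z‖ ^ 2 * (c * ‖w‖) := by ring
    _ ≤ ‖z‖ ^ 2 * w.re := by gcongr

lemma Complex.cos_mul_norm_le_re {α : ℝ} {w : ℂ} (hre : 0 ≤ w.re)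
    (him : |w.im| ≤ w.re * |Real.tan α|) : Real.cos α * ‖w‖ ≤ w.re := by
  rcases le_or_gt (Real.cos α) 0 with hcos | hcos
  · exact (mul_nonpos_of_nonpos_of_nonneg hcos (norm_nonneg w)).trans hre
  have hsin : Real.cos α * |Real.tan α| = |Real.sin α| := by
    rw [Real.tan_eq_sin_div_cos, abs_div, abs_of_pos hcos, mul_div_cancel₀ _ hcos.ne']
  have him' : (Real.cos α * w.im) ^ 2 ≤ (w.re * Real.sin α) ^ 2 := by
    rw [← sq_abs, ← sq_abs (w.re * _), abs_mul, abs_mul, abs_of_pos hcos, abs_of_nonneg hre,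
      ← hsin, mul_left_comm]
    exact pow_le_pow_left₀ (by positivity) (mul_le_mul_of_nonneg_left him hcos.le) 2
  rw [norm_def, ← Real.sqrt_sq hre, ← Real.sqrt_sq hcos.le, ← Real.sqrt_mul (sq_nonneg _)]
  apply Real.sqrt_le_sqrt
  rw [normSq_apply]
  nlinarith [Real.sin_sq_add_cos_sq α]

lemma hasDerivAt_ofReal_exp_mul_exp_I_mul {u v : ℝ → ℝ} {u' v' t : ℝ}
    (hu : HasDerivAt u u' t) (hv : HasDerivAt v v' t) :
    HasDerivAt (fun s => (Real.exp (u s) : ℂ) * exp (I * (v s : ℂ)))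
      ((Real.exp (u t) : ℂ) * exp (I * (v t : ℂ)) * ((u' : ℂ) + I * v')) t := by
  have hexp : (fun s => (Real.exp (u s) : ℂ) * exp (I * (v s : ℂ))) =
      fun s => exp (u s + I * (v s : ℂ)) :=
    funext fun s => by rw [exp_add, ofReal_exp]
  rw [hexp, ofReal_exp, ← exp_add]
  exact (hu.ofReal_comp.add (hv.ofReal_comp.const_mul I)).cexp

theorem rsa_transformation_angle_general (α : ℝ)
    (x y : ℝ → ℝ)
    (hx : ∀ t : ℝ, DifferentiableAt ℝ x t) (hy : ∀ t : ℝ, DifferentiableAt ℝ y t)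
    (hx' : ∀ t : ℝ, 0 ≤ deriv x t) (hy' : ∀ t : ℝ, 0 ≤ deriv y t)
    (γ : ℝ → ℂ)
    (hγ : ∀ t : ℝ, γ t = (Complex.ofReal (Real.exp (x t + y t))) *
      Complex.exp (Complex.I * Complex.ofReal ((y t - x t) * Real.tan α))) :
    ∀ t : ℝ, ((starRingEnd ℂ) (deriv γ t) * γ t).re ≥
      Real.cos α * ‖deriv γ t‖ * ‖γ t‖ := by
  intro t
  set a := deriv x t
  set b := deriv y t
  set w : ℂ := ↑(a + b) + I * ↑((b - a) * Real.tan α)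
  have hderiv : HasDerivAt γ (γ t * w) t := by
    rw [hγ t, funext hγ]
    exact hasDerivAt_ofReal_exp_mul_exp_I_mul ((hx t).hasDerivAt.add (hy t).hasDerivAt)
      (((hy t).hasDerivAt.sub (hx t).hasDerivAt).mul_const (Real.tan α))
  have hw : Real.cos α * ‖w‖ ≤ w.re := by
    have hba : |b - a| ≤ a + b := abs_sub_le_iff.2 ⟨by linarith [hx' t], by linarith [hy' t]⟩
    apply cos_mul_norm_le_re
    · simpa [w, -ofReal_tan] using add_nonneg (hx' t) (hy' t)
    · simpa [w, abs_mul, -ofReal_tan] using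
        mul_le_mul_of_nonneg_right hba (abs_nonneg (Real.tan α))
  rw [hderiv.deriv]
  exact mul_norm_mul_norm_le_re_conj_mul_mul_self (γ t) hw

/-- the transformation `(x,y) ↦ e^{x+y}·exp(i·(y−x)·tan α)` maps any
north-east monotone path to a curve whose tangent makes angle at most `α` with the
outward radial direction: `⟪deriv γ t, γ(t)⟫ ≥ cos(α)·‖deriv γ t‖·‖γ(t)‖`. -/
theorem rsa_transformation_angle (α : ℝ) (hα0 : 0 < α) (hα : α < Real.pi / 2)
    (x y : ℝ → ℝ)
    (hx : ∀ t : ℝ, DifferentiableAt ℝ x t) (hy : ∀ t : ℝ, DifferentiableAt ℝ y t)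
    (hx' : ∀ t : ℝ, 0 ≤ deriv x t) (hy' : ∀ t : ℝ, 0 ≤ deriv y t)
    (γ : ℝ → ℂ)
    (hγ : ∀ t : ℝ, γ t = (Complex.ofReal (Real.exp (x t + y t))) *
      Complex.exp (Complex.I * Complex.ofReal ((y t - x t) * Real.tan α))) :
    ∀ t : ℝ, ((starRingEnd ℂ) (deriv γ t) * γ t).re ≥
      Real.cos α * ‖deriv γ t‖ * ‖γ t‖ :=
  rsa_transformation_angle_general α x y hx hy hx' hy' γ hγ
end

section
/- Let 0 < α < π/2. For p, q ∈ ℂ, say that q is angle-restricted reachable from p if there exists a continuously differentiable curve γ : ℝ → ℂ with γ(0) = p, γ(1) = q such that for every t ∈ [0,1], γ(t) ≠ 0 and ⟪deriv γ t, −γ(t)⟫ ≥ cos(α)·‖deriv γ t‖·‖γ(t)‖. Then this relation is transitive: if q is angle-restricted reachable from p and u is angle-restricted reachable from q, then u is angle-restricted reachable from p. -/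
/-- `q` is angle-restricted reachable from `p` (restricting angle `α`, root at the
origin): there is a continuously differentiable curve from `p` to `q` whose tangent
everywhere on `[0,1]` makes angle at most `α` with the direction toward the origin. -/
def AngleRestrictedReachable (α : ℝ) (p q : ℂ) : Prop :=
  ∃ γ : ℝ → ℂ, γ 0 = p ∧ γ 1 = q ∧ ContDiffOn ℝ 1 γ (Set.Icc 0 1) ∧
    ∀ t ∈ Set.Icc (0:ℝ) 1, γ t ≠ 0 ∧
      ((starRingEnd ℂ) (deriv γ t) * (-(γ t))).re ≥
        Real.cos α * ‖deriv γ t‖ * ‖γ t‖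

/-!
Reparametrise each curve by a smooth monotone ramp that is constant near the ends of `[0, 1]`.
A monotone reparametrisation only rescales the tangent by a nonnegative factor, so the angle
condition survives, and the reparametrised curves are constant (equal to `q`) on overlapping
plateaus. Their sum minus `q` is therefore a `C¹` curve from `p` to `u` which near every time
agrees with one of the two reparametrised curves.
-/

open Set Filter Topology

/-- `v` makes an angle of at most `α` with the direction `-z` towards the origin. -/
def PointsTowardOrigin (α : ℝ) (z v : ℂ) : Prop :=
  ((starRingEnd ℂ) v * (-z)).re ≥ Real.cos α * ‖v‖ * ‖z‖

theorem pointsTowardOrigin_zero (α : ℝ) (z : ℂ) : PointsTowardOrigin α z 0 := by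
  simp [PointsTowardOrigin]

theorem PointsTowardOrigin.smul {α c : ℝ} {z v : ℂ} (h : PointsTowardOrigin α z v)
    (hc : 0 ≤ c) : PointsTowardOrigin α z (c • v) := by
  have hconj : (starRingEnd ℂ) (c • v) = c • (starRingEnd ℂ) v := by simp
  unfold PointsTowardOrigin at h ⊢
  rw [hconj, smul_mul_assoc, Complex.real_smul, Complex.re_ofReal_mul, norm_smul,
    Real.norm_eq_abs, abs_of_nonneg hc]
  calc Real.cos α * (c * ‖v‖) * ‖z‖ = c * (Real.cos α * ‖v‖ * ‖z‖) := by ring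
    _ ≤ c * ((starRingEnd ℂ) v * (-z)).re := mul_le_mul_of_nonneg_left h hc

def AngleRestrictedAt (α : ℝ) (γ : ℝ → ℂ) (t : ℝ) : Prop :=
  γ t ≠ 0 ∧ PointsTowardOrigin α (γ t) (deriv γ t)

theorem AngleRestrictedAt.congr_of_eventuallyEq {α t : ℝ} {γ η : ℝ → ℂ}
    (h : AngleRestrictedAt α γ t) (hη : η =ᶠ[𝓝 t] γ) : AngleRestrictedAt α η t := by
  rw [AngleRestrictedAt, hη.eq_of_nhds, hη.deriv_eq]
  exact h

theorem AngleRestrictedAt.comp_monotone {α a b t : ℝ} {γ : ℝ → ℂ} {ψ : ℝ → ℝ}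
    (hγ : DifferentiableOn ℝ γ (Icc a b)) (h : AngleRestrictedAt α γ (ψ t))
    (hψ : DifferentiableAt ℝ ψ t) (hmono : Monotone ψ) (hmem : ∀ x, ψ x ∈ Icc a b) :
    AngleRestrictedAt α (γ ∘ ψ) t := by
  have hderiv : deriv (γ ∘ ψ) t = deriv ψ t • derivWithin γ (Icc a b) (ψ t) :=
    ((hγ _ (hmem t)).hasDerivWithinAt.scomp_hasDerivAt t hψ.hasDerivAt hmem).deriv
  refine ⟨h.1, ?_⟩
  rw [hderiv]
  by_cases hzero : deriv ψ t = 0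
  · rw [hzero, zero_smul]
    exact pointsTowardOrigin_zero α _
  -- at an endpoint of `[a, b]`, `ψ` would be extremal and so have vanishing derivative
  have hinterior : ψ t ∈ Ioo a b := by
    refine ⟨(hmem t).1.lt_of_ne fun hat => hzero ?_, (hmem t).2.lt_of_ne fun htb => hzero ?_⟩
    · exact IsLocalMin.deriv_eq_zero (Eventually.of_forall fun x => hat ▸ (hmem x).1)
    · exact IsLocalMax.deriv_eq_zero (Eventually.of_forall fun x => htb ▸ (hmem x).2)
  rw [derivWithin_of_mem_nhds (Icc_mem_nhds hinterior.1 hinterior.2)]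
  exact h.2.smul hmono.deriv_nonneg

/-- Vanishes for `t ≤ k / 3` and equals `1` for `t ≥ (k + 1) / 3`. -/
noncomputable def ramp (k t : ℝ) : ℝ :=
  Real.smoothTransition (3 * t - k)

theorem ramp_eq_zero {k t : ℝ} (h : 3 * t ≤ k) : ramp k t = 0 :=
  Real.smoothTransition.zero_of_nonpos (by linarith)

theorem ramp_eq_one {k t : ℝ} (h : k + 1 ≤ 3 * t) : ramp k t = 1 :=
  Real.smoothTransition.one_of_one_le (by linarith)

theorem contDiff_ramp (k : ℝ) : ContDiff ℝ 1 (ramp k) :=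
  Real.smoothTransition.contDiff.comp ((contDiff_const.mul contDiff_id).sub contDiff_const)

theorem monotone_ramp (k : ℝ) : Monotone (ramp k) :=
  Real.smoothTransition.monotone.comp fun _ _ hxy => by linarith

theorem ramp_mem_Icc (k t : ℝ) : ramp k t ∈ Icc 0 1 :=
  ⟨Real.smoothTransition.nonneg _, Real.smoothTransition.le_one _⟩

theorem angleRestrictedAt_comp_ramp {α : ℝ} {γ : ℝ → ℂ} (hγ : ContDiffOn ℝ 1 γ (Icc 0 1))
    (h : ∀ t ∈ Icc (0 : ℝ) 1, AngleRestrictedAt α γ t) (k t : ℝ) :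
    AngleRestrictedAt α (γ ∘ ramp k) t :=
  (h _ (ramp_mem_Icc k t)).comp_monotone (hγ.differentiableOn one_ne_zero)
    ((contDiff_ramp k).differentiable one_ne_zero t) (monotone_ramp k) (ramp_mem_Icc k)

theorem angleRestrictedReachable_trans_general (α : ℝ) (p q u : ℂ) (hpq : AngleRestrictedReachable α p q)
    (hqu : AngleRestrictedReachable α q u) :
    AngleRestrictedReachable α p u := by
  obtain ⟨γ₁, hp, hq₁, hC₁, h₁⟩ := hpq
  obtain ⟨γ₂, hq₂, hu, hC₂, h₂⟩ := hqu
  have hγ₁q : ∀ t, 1 / 3 < t → γ₁ (ramp 0 t) = q := fun t ht => by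
    rw [ramp_eq_one (by linarith), hq₁]
  have hγ₂q : ∀ t, t < 2 / 3 → γ₂ (ramp 2 t) = q := fun t ht => by
    rw [ramp_eq_zero (by linarith), hq₂]
  let η : ℝ → ℂ := fun t => γ₁ (ramp 0 t) + γ₂ (ramp 2 t) - q
  have hη : ∀ t, AngleRestrictedAt α η t := fun t => by
    rcases le_or_gt t (1 / 2) with ht | ht
    · refine (angleRestrictedAt_comp_ramp hC₁ h₁ 0 t).congr_of_eventuallyEq ?_
      filter_upwards [Iio_mem_nhds (show t < 2 / 3 by linarith)] with s hs
      simp [η, hγ₂q s hs]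
    · refine (angleRestrictedAt_comp_ramp hC₂ h₂ 2 t).congr_of_eventuallyEq ?_
      filter_upwards [Ioi_mem_nhds (show 1 / 3 < t by linarith)] with s hs
      simp [η, hγ₁q s hs]
  refine ⟨η, ?_, ?_, ?_, fun t _ => hη t⟩
  · simp only [η, hγ₂q 0 (by norm_num), ramp_eq_zero (k := 0) (t := 0) (by norm_num), hp,
      add_sub_cancel_right]
  · simp only [η, hγ₁q 1 (by norm_num), ramp_eq_one (k := 2) (t := 1) (by norm_num), hu,
      add_sub_cancel_left]
  · exact (((hC₁.comp_contDiff (contDiff_ramp 0) (ramp_mem_Icc 0)).add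
      (hC₂.comp_contDiff (contDiff_ramp 2) (ramp_mem_Icc 2))).sub contDiff_const).contDiffOn

/-- angle-restricted reachability is transitive (hence for all
`q ∈ R_p`, `R_q ⊆ R_p`). -/
theorem angleRestrictedReachable_trans (α : ℝ) (hα0 : 0 < α) (hα : α < Real.pi / 2)
    (p q u : ℂ) (hpq : AngleRestrictedReachable α p q)
    (hqu : AngleRestrictedReachable α q u) :
    AngleRestrictedReachable α p u :=
  angleRestrictedReachable_trans_general α p q u hpq hqu
end

section
/- Let 0 < α < π/2, let R₁, R₂ > 0 and φ₁ ≤ φ₂ be reals, and set Δ = φ₂ − φ₁, t = (Δ/tan α + log(R₁/R₂))/2 and s = (Δ/tan α − log(R₁/R₂))/2. Then the right spiral through (R₁, φ₁) and the left spiral through (R₂, φ₂) meet at these parameters: R₁·e^{−t}·exp(i·(φ₁ + tan(α)·t)) = R₂·e^{−s}·exp(i·(φ₂ − tan(α)·s)), and the common point has modulus R₁·e^{−t} = √(R₁·R₂)·e^{−Δ/(2·tan α)}. -/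
/-! Both spirals are parametrised so that `log` of the modulus and the argument are affine in
the parameter. Meeting therefore amounts to two linear equations, `log R₁ - t = log R₂ - s` and
`φ₁ + t tan α = φ₂ - s tan α`, whose solution is the given `(t, s)`; the common modulus is then
`exp` of the average `(log R₁ + log R₂ - (t + s)) / 2`, with `t + s = Δ / tan α`. -/

open Real

theorem mul_exp_neg_half_add_log_div {a b : ℝ} (ha : 0 < a) (hb : 0 < b) (x : ℝ) :
    a * exp (-((x + log (a / b)) / 2)) = √(a * b) * exp (-(x / 2)) := by
  have hsqrt : √(a * b) = exp ((log a + log b) / 2) := by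
    rw [sqrt_eq_rpow, rpow_def_of_pos (mul_pos ha hb), log_mul ha.ne' hb.ne']
    ring_nf
  rw [hsqrt, log_div ha.ne' hb.ne', ← exp_add]
  nth_rewrite 1 [← exp_log ha]
  rw [← exp_add]
  ring_nf

theorem mul_exp_neg_half_sub_log_div {a b : ℝ} (ha : 0 < a) (hb : 0 < b) (x : ℝ) :
    b * exp (-((x - log (a / b)) / 2)) = √(a * b) * exp (-(x / 2)) := by
  rw [sub_eq_add_neg, ← log_inv, inv_div, mul_comm a, mul_exp_neg_half_add_log_div hb ha]

theorem add_mul_half_add_eq_sub_mul_half_sub {c : ℝ} (hc : c ≠ 0) (φ₁ φ₂ L : ℝ) :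
    φ₁ + c * (((φ₂ - φ₁) / c + L) / 2) = φ₂ - c * (((φ₂ - φ₁) / c - L) / 2) := by
  field_simp
  ring

theorem spiral_join_point_general (α R₁ R₂ φ₁ φ₂ : ℝ) (hα0 : 0 < α) (hα : α < Real.pi / 2)
    (hR₁ : 0 < R₁) (hR₂ : 0 < R₂) :
    (Complex.ofReal (R₁ * Real.exp (-(((φ₂ - φ₁) / Real.tan α + Real.log (R₁ / R₂)) / 2))) *
        Complex.exp (Complex.I * Complex.ofReal (φ₁ +
          Real.tan α * (((φ₂ - φ₁) / Real.tan α + Real.log (R₁ / R₂)) / 2))) =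
      Complex.ofReal (R₂ * Real.exp (-(((φ₂ - φ₁) / Real.tan α - Real.log (R₁ / R₂)) / 2))) *
        Complex.exp (Complex.I * Complex.ofReal (φ₂ -
          Real.tan α * (((φ₂ - φ₁) / Real.tan α - Real.log (R₁ / R₂)) / 2)))) ∧
    R₁ * Real.exp (-(((φ₂ - φ₁) / Real.tan α + Real.log (R₁ / R₂)) / 2)) =
      Real.sqrt (R₁ * R₂) * Real.exp (-((φ₂ - φ₁) / (2 * Real.tan α))) := by
  have htan : tan α ≠ 0 := (tan_pos_of_pos_of_lt_pi_div_two hα0 hα).ne'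
  have hhalf : (φ₂ - φ₁) / tan α / 2 = (φ₂ - φ₁) / (2 * tan α) := by
    rw [div_div, mul_comm]
  refine ⟨?_, ?_⟩
  · rw [add_mul_half_add_eq_sub_mul_half_sub htan, mul_exp_neg_half_add_log_div hR₁ hR₂,
      mul_exp_neg_half_sub_log_div hR₁ hR₂]
  · rw [mul_exp_neg_half_add_log_div hR₁ hR₂, hhalf]

/-- the right spiral through `(R₁, φ₁)` and the left spiral through
`(R₂, φ₂)` meet at parameters `t = (Δ/tan α + log(R₁/R₂))/2` and
`s = (Δ/tan α − log(R₁/R₂))/2` (where `Δ = φ₂ − φ₁`), and the common point (the join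
point) has modulus `√(R₁·R₂)·e^{−Δ/(2 tan α)}`. -/
theorem spiral_join_point (α R₁ R₂ φ₁ φ₂ : ℝ) (hα0 : 0 < α) (hα : α < Real.pi / 2)
    (hR₁ : 0 < R₁) (hR₂ : 0 < R₂) (hφ : φ₁ ≤ φ₂) :
    (Complex.ofReal (R₁ * Real.exp (-(((φ₂ - φ₁) / Real.tan α + Real.log (R₁ / R₂)) / 2))) *
        Complex.exp (Complex.I * Complex.ofReal (φ₁ +
          Real.tan α * (((φ₂ - φ₁) / Real.tan α + Real.log (R₁ / R₂)) / 2))) =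
      Complex.ofReal (R₂ * Real.exp (-(((φ₂ - φ₁) / Real.tan α - Real.log (R₁ / R₂)) / 2))) *
        Complex.exp (Complex.I * Complex.ofReal (φ₂ -
          Real.tan α * (((φ₂ - φ₁) / Real.tan α - Real.log (R₁ / R₂)) / 2)))) ∧
    R₁ * Real.exp (-(((φ₂ - φ₁) / Real.tan α + Real.log (R₁ / R₂)) / 2)) =
      Real.sqrt (R₁ * R₂) * Real.exp (-((φ₂ - φ₁) / (2 * Real.tan α))) :=
  spiral_join_point_general α R₁ R₂ φ₁ φ₂ hα0 hα hR₁ hR₂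
end

section
/- Let p₁, p₂ ∈ ℂ, set D = ‖p₁ − p₂‖ and R₂ = ‖p₂‖, and suppose R₂ > (3/2)·D. Then the angle between the vectors p₁ and p₂ (i.e., arccos(⟪p₁,p₂⟫/(‖p₁‖·‖p₂‖)) with the real inner product ⟪z,w⟫ = Re(conj(z)·w)) is at most 3·D/(√5·R₂). -/
/-!
By the law of sines in the triangle `0, p₁, p₂`, `sin ∠(p₁, p₂) · ‖p₂‖` equals `‖p₁ - p₂‖` times
the sine of the angle at `p₁`, so `sin ∠(p₁, p₂) ≤ D / R₂`. Since `D < R₂`, the angle is acute,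
hence it is at most `arcsin (D / R₂) = arctan (D / √(R₂² - D²)) ≤ D / √(R₂² - D²)`, and
`R₂ > 3D/2` gives `R₂² - D² > (5/9) R₂²`.
-/

open Real InnerProductGeometry
open scoped RealInnerProductSpace

namespace Real

theorem arctan_le_self {x : ℝ} (hx : 0 ≤ x) : arctan x ≤ x := by
  simpa only [tan_arctan] using le_tan (arctan_nonneg.2 hx) (arctan_lt_pi_div_two x)

theorem arcsin_le_div_sqrt_one_sub_sq {t : ℝ} (h₀ : 0 ≤ t) (h₁ : t < 1) :
    arcsin t ≤ t / √(1 - t ^ 2) := by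
  rw [arcsin_eq_arctan ⟨by linarith, h₁⟩]
  exact arctan_le_self (by positivity)

end Real

namespace InnerProductGeometry

variable {V : Type*} [NormedAddCommGroup V] [InnerProductSpace ℝ V]

theorem sin_angle_mul_norm_le_norm_sub (x y : V) : sin (angle x y) * ‖y‖ ≤ ‖x - y‖ := by
  rw [angle_comm, sin_angle_mul_norm_eq_sin_angle_mul_norm, norm_sub_rev]
  exact mul_le_of_le_one_left (norm_nonneg _) (sin_le_one _)

theorem inner_nonneg_of_norm_sub_le_norm {x y : V} (h : ‖x - y‖ ≤ ‖y‖) : 0 ≤ ⟪x, y⟫ := by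
  nlinarith [norm_sub_sq_real x y, norm_nonneg (x - y), sq_nonneg ‖x‖]

theorem angle_le_pi_div_two_of_inner_nonneg {x y : V} (h : 0 ≤ ⟪x, y⟫) :
    angle x y ≤ π / 2 :=
  arccos_le_pi_div_two.2 (div_nonneg h (by positivity))

theorem angle_le_arcsin_of_norm_sub_le_norm {x y : V} (hy : y ≠ 0) (h : ‖x - y‖ ≤ ‖y‖) :
    angle x y ≤ arcsin (‖x - y‖ / ‖y‖) := by
  have hacute := angle_le_pi_div_two_of_inner_nonneg (inner_nonneg_of_norm_sub_le_norm h)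
  rw [le_arcsin_iff_sin_le' ⟨by linarith [angle_nonneg x y, pi_pos], hacute⟩,
    le_div_iff₀ (norm_pos_iff.2 hy)]
  exact sin_angle_mul_norm_le_norm_sub x y

end InnerProductGeometry

/-- if `D = ‖p₁ − p₂‖`, `R₂ = ‖p₂‖` and `R₂ > (3/2)·D`, then the angle
between the vectors `p₁` and `p₂` (with respect to the real inner product
`⟪z,w⟫ = Re(conj(z)·w)` on `ℂ`) is at most `3·D/(√5·R₂)`. -/
theorem angle_bound_shallow_light (p₁ p₂ : ℂ)
    (h : ‖p₂‖ > (3 / 2) * ‖p₁ - p₂‖) :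
    Real.arccos ((((starRingEnd ℂ) p₁ * p₂).re) / (‖p₁‖ * ‖p₂‖)) ≤
      3 * ‖p₁ - p₂‖ / (Real.sqrt 5 * ‖p₂‖) := by
  rw [mul_comm ((starRingEnd ℂ) p₁), ← Complex.inner, ← angle]
  have hD : 0 ≤ ‖p₁ - p₂‖ := norm_nonneg _
  have hR : 0 < ‖p₂‖ := by linarith
  have hratio : ‖p₁ - p₂‖ / ‖p₂‖ < 2 / 3 := by rw [div_lt_iff₀ hR]; linarith
  calc angle p₁ p₂ ≤ arcsin (‖p₁ - p₂‖ / ‖p₂‖) :=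
        angle_le_arcsin_of_norm_sub_le_norm (norm_pos_iff.1 hR) (by linarith)
    _ ≤ ‖p₁ - p₂‖ / ‖p₂‖ / √(1 - (‖p₁ - p₂‖ / ‖p₂‖) ^ 2) :=
        arcsin_le_div_sqrt_one_sub_sq (by positivity) (by linarith)
    _ ≤ ‖p₁ - p₂‖ / ‖p₂‖ / √(5 / 9) := by
        gcongr
        nlinarith [div_nonneg hD hR.le]
    _ = 3 * ‖p₁ - p₂‖ / (√5 * ‖p₂‖) := by
        rw [sqrt_div' _ (by norm_num : (0 : ℝ) ≤ 9), show (9 : ℝ) = 3 ^ 2 by norm_num,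
          sqrt_sq (by norm_num)]
        field_simp
end
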